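/- arXiv:2405.20652 — 9 statements merged into one kernel-verified Lean document; each statement's English description precedes it below -/
import Mathlib

section
/- There exist an integer N ≥ 3, a labeling y : Fin N → Fin 3 using three distinct classes, a simple graph G on vertex set Fin N, and real symmetric N×N matrices A₁ and A₂ with zero diagonal whose supports are contained in the edge set of G (i.e., for each k, (A_k)_{ij} ≠ 0 only if {i,j} is an edge of G), such that both A₁ and A₂ are desirable with respect to y, but the product A₂ · A₁ is not desirable with respect to y. -/
/-! The negated adjacency matrix of a graph is desirable for any proper colouring, but its square
is the adjacency square, which counts walks of length two: a walk `i - k - j` between two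
differently coloured vertices gives a positive entry where a desirable matrix must be `≤ 0`.
The triangle, properly coloured with three colours, is such a graph. -/

/-- A real `N × N` matrix `M` is *desirable* with respect to a labeling `y` if
`M i j ≥ 0` whenever `y i = y j` and `M i j ≤ 0` whenever `y i ≠ y j`. -/
def Desirable {N C : ℕ} (y : Fin N → Fin C) (M : Matrix (Fin N) (Fin N) ℝ) : Prop :=
  ∀ i j, (y i = y j → 0 ≤ M i j) ∧ (y i ≠ y j → M i j ≤ 0)

namespace SimpleGraph

variable {V α : Type*} {G : SimpleGraph V} [Fintype V] [DecidableRel G.Adj]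

theorem adjMatrix_mul_self_apply_pos [Semiring α] [PartialOrder α] [IsStrictOrderedRing α]
    {i k j : V} (hik : G.Adj i k) (hkj : G.Adj k j) :
    0 < (G.adjMatrix α * G.adjMatrix α) i j := by
  rw [adjMatrix_mul_apply]
  calc (0 : α) < G.adjMatrix α k j := by simp [adjMatrix_apply, hkj]
    _ ≤ ∑ u ∈ G.neighborFinset i, G.adjMatrix α u j :=
      Finset.single_le_sum (f := fun u => G.adjMatrix α u j)
        (fun u _ => by rw [adjMatrix_apply]; split_ifs <;> simp) ((G.mem_neighborFinset i k).2 hik)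

end SimpleGraph

section

variable {N C : ℕ} {G : SimpleGraph (Fin N)} [DecidableRel G.Adj] {y : Fin N → Fin C}

theorem desirable_neg_adjMatrix (hy : ∀ ⦃i j⦄, G.Adj i j → y i ≠ y j) :
    Desirable y (-G.adjMatrix ℝ) := by
  intro i j
  by_cases h : G.Adj i j
  · exact ⟨fun hij => absurd hij (hy h), fun _ => by simp [SimpleGraph.adjMatrix_apply, h]⟩
  · simp [SimpleGraph.adjMatrix_apply, h]

theorem not_desirable_neg_adjMatrix_mul_self {i k j : Fin N} (hik : G.Adj i k) (hkj : G.Adj k j)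
    (hij : y i ≠ y j) : ¬ Desirable y (-G.adjMatrix ℝ * -G.adjMatrix ℝ) := by
  intro h
  have hpos := SimpleGraph.adjMatrix_mul_self_apply_pos (α := ℝ) hik hkj
  rw [neg_mul_neg] at h
  exact (h i j).2 hij |>.not_gt hpos

end

theorem stmt_0 :
    ∃ (N : ℕ), 3 ≤ N ∧
    ∃ (y : Fin N → Fin 3) (G : SimpleGraph (Fin N))
      (A₁ A₂ : Matrix (Fin N) (Fin N) ℝ),
      Function.Surjective y ∧
      A₁.IsSymm ∧ A₂.IsSymm ∧
      (∀ i, A₁ i i = 0) ∧ (∀ i, A₂ i i = 0) ∧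
      (∀ i j, A₁ i j ≠ 0 → G.Adj i j) ∧
      (∀ i j, A₂ i j ≠ 0 → G.Adj i j) ∧
      Desirable y A₁ ∧ Desirable y A₂ ∧ ¬ Desirable y (A₂ * A₁) := by
  set A := -(⊤ : SimpleGraph (Fin 3)).adjMatrix ℝ
  have hsymm : A.IsSymm := (SimpleGraph.isSymm_adjMatrix _).neg
  have hdiag : ∀ i, A i i = 0 := by simp [A]
  have hsupp : ∀ i j, A i j ≠ 0 → (⊤ : SimpleGraph (Fin 3)).Adj i j := fun i j h => by
    simpa [A] using h
  have hdes : Desirable id A := desirable_neg_adjMatrix fun _ _ => id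
  exact ⟨3, le_rfl, id, ⊤, A, A, Function.surjective_id, hsymm, hsymm, hdiag, hdiag, hsupp, hsupp,
    hdes, hdes, not_desirable_neg_adjMatrix_mul_self (i := 0) (k := 2) (j := 1)
      (by decide) (by decide) (by decide)⟩
end

section
/- Let y : Fin 3 → Fin 3 be a bijective labeling (the three nodes have pairwise distinct classes), and let G be the path graph on Fin 3 with edges {0,1} and {1,2}. Let A₁, A₂ be real 3×3 matrices whose supports are contained in the edge set of G (i.e., (A_k)_{ij} ≠ 0 only if {i,j} ∈ {{0,1},{1,2}}), which are desirable with respect to y, and whose entries on the edges used below are strictly negative: (A₁)_{1,0} < 0 and (A₂)_{2,1} < 0. Then (A₂ · A₁)_{2,0} = (A₂)_{2,1} · (A₁)_{1,0} > 0 while y(2) ≠ y(0); hence A₂ · A₁ is not desirable with respect to y. -/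
theorem stmt_1 (y : Fin 3 → Fin 3) (hy : Function.Bijective y)
    (A₁ A₂ : Matrix (Fin 3) (Fin 3) ℝ)
    (hsupp₁ : ∀ i j, A₁ i j ≠ 0 →
      (({i, j} : Finset (Fin 3)) = {0, 1} ∨ ({i, j} : Finset (Fin 3)) = {1, 2}))
    (hsupp₂ : ∀ i j, A₂ i j ≠ 0 →
      (({i, j} : Finset (Fin 3)) = {0, 1} ∨ ({i, j} : Finset (Fin 3)) = {1, 2}))
    (hdes₁ : Desirable y A₁) (hdes₂ : Desirable y A₂)
    (h₁ : A₁ 1 0 < 0) (h₂ : A₂ 2 1 < 0) :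
    (A₂ * A₁) 2 0 = A₂ 2 1 * A₁ 1 0 ∧ 0 < (A₂ * A₁) 2 0 ∧ y 2 ≠ y 0 ∧
      ¬ Desirable y (A₂ * A₁) := by
  have hA₂20 : A₂ 2 0 = 0 := by
    by_contra h
    rcases hsupp₂ 2 0 h with h' | h' <;> revert h' <;> decide
  have hA₁20 : A₁ 2 0 = 0 := by
    by_contra h
    rcases hsupp₁ 2 0 h with h' | h' <;> revert h' <;> decide
  have hA₁00 : A₂ 2 2 * A₁ 2 0 = 0 := by rw [hA₁20, mul_zero]
  have heq : (A₂ * A₁) 2 0 = A₂ 2 1 * A₁ 1 0 := by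
    show ∑ k, A₂ 2 k * A₁ k 0 = _
    rw [Fin.sum_univ_three, hA₂20, hA₁20, zero_mul, mul_zero]
    ring
  have hpos : 0 < (A₂ * A₁) 2 0 := by
    rw [heq]; exact mul_pos_of_neg_of_neg h₂ h₁
  have hne : y 2 ≠ y 0 := fun h => by have := hy.1 h; exact absurd this (by decide)
  exact ⟨heq, hpos, hne, fun hd => absurd ((hd 2 0).2 hne) (by linarith)⟩
end

section
/- For all classes a, b ∈ Fin C and all K ∈ ℕ, the class means of the K-th layer embeddings satisfy h̄_a^{(K)} − h̄_b^{(K)} = ((p+q)/(p+(C−1)q))^K · (u_a − u_b). -/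
/-!
`P̄` is the lift `A.submatrix y y` of a `C × C` matrix `A` along the labelling, and `X` is the
lift of the matrix `U` of class means. Since every class has `m = N / C` nodes, `P̄ ^ K * X` is
the lift of `(m • A) ^ K * U`, so the class mean `h̄_c^{(K)}` is the row `c` of that matrix.
With `s = p + (C - 1) q` one has `m • A = ((p + q) / s) • 1 - (q / s) • J` (`J` all ones), and
`J * B` has identical rows, so each multiplication by `m • A` scales row differences by
`(p + q) / s`.
-/

open Finset Matrix

namespace Matrix

variable {ι κ α R : Type*} [Fintype ι] [Fintype κ] [DecidableEq κ]

theorem submatrix_mul_submatrix_of_card_fiber [Semiring R] {y : ι → κ} {m : ℕ}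
    (hfiber : ∀ c, #{i | y i = c} = m) (A : Matrix κ κ R) (V : Matrix κ α R) :
    A.submatrix y y * V.submatrix y id = (m • (A * V)).submatrix y id := by
  ext i k
  simp only [mul_apply, submatrix_apply, id, smul_apply, smul_sum]
  rw [← sum_fiberwise univ y]
  refine sum_congr rfl fun c _ => ?_
  rw [sum_congr rfl fun j hj => by rw [(mem_filter.mp hj).2], sum_const, hfiber]

theorem submatrix_pow_mul_submatrix_of_card_fiber [DecidableEq ι] [Semiring R] {y : ι → κ}
    {m : ℕ} (hfiber : ∀ c, #{i | y i = c} = m) (A : Matrix κ κ R) (V : Matrix κ α R) (K : ℕ) :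
    A.submatrix y y ^ K * V.submatrix y id = ((m • A) ^ K * V).submatrix y id := by
  induction K with
  | zero => simp
  | succ K ih =>
    rw [pow_succ', Matrix.mul_assoc, ih, submatrix_mul_submatrix_of_card_fiber hfiber,
      pow_succ', Matrix.mul_assoc, smul_mul]

omit [Fintype κ] in
theorem sum_fiber_submatrix_of_card_fiber [AddCommMonoid R] {y : ι → κ} {m : ℕ}
    (hfiber : ∀ c, #{i | y i = c} = m) (B : Matrix κ α R) (c : κ) :
    ∑ i with y i = c, B.submatrix y id i = m • B c := by
  rw [sum_congr rfl fun i hi => show B.submatrix y id i = B c from congrArg B (mem_filter.mp hi).2,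
    sum_const, hfiber]

theorem card_eq_card_mul_of_card_fiber {y : ι → κ} {m : ℕ}
    (hfiber : ∀ c, #{i | y i = c} = m) : Fintype.card ι = Fintype.card κ * m := by
  rw [← card_univ, card_eq_sum_card_fiberwise (f := y) (t := univ) (by simp),
    sum_congr rfl fun c _ => hfiber c, sum_const, card_univ, smul_eq_mul]

theorem smul_one_add_replicateRow_mul_sub [CommRing R] (a : R) (w : κ → R) (B : Matrix κ α R)
    (i j : κ) :
    ((a • 1 + replicateRow κ w : Matrix κ κ R) * B) i -
      ((a • 1 + replicateRow κ w : Matrix κ κ R) * B) j = a • (B i - B j) := by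
  rw [Matrix.add_mul, smul_mul, Matrix.one_mul]
  ext k
  simp only [Pi.sub_apply, add_apply, smul_apply, smul_eq_mul, mul_apply, replicateRow_apply,
    add_sub_add_right_eq_sub, Pi.smul_apply]
  ring

theorem smul_one_add_replicateRow_pow_mul_sub [CommRing R] (a : R) (w : κ → R)
    (B : Matrix κ α R) (K : ℕ) (i j : κ) :
    ((a • 1 + replicateRow κ w : Matrix κ κ R) ^ K * B) i -
      ((a • 1 + replicateRow κ w : Matrix κ κ R) ^ K * B) j = a ^ K • (B i - B j) := by
  induction K with
  | zero => simp
  | succ K ih =>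
    rw [pow_succ', Matrix.mul_assoc, smul_one_add_replicateRow_mul_sub, ih, smul_smul, pow_succ']

end Matrix

theorem stmt_2_general (C N f : ℕ) (hN : 0 < N)
    (y : Fin N → Fin C)
    (hclass : ∀ c : Fin C,
      (Finset.univ.filter (fun i => y i = c)).card = N / C)
    (p q : ℝ)
    (u : Fin C → Fin f → ℝ)
    (P : Matrix (Fin N) (Fin N) ℝ)
    (hP : ∀ i j, P i j =
      if y i = y j then ((C : ℝ) / (N * (p + ((C : ℝ) - 1) * q))) * p
      else -(((C : ℝ) / (N * (p + ((C : ℝ) - 1) * q))) * q))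
    (X : Matrix (Fin N) (Fin f) ℝ)
    (hX : ∀ i, X i = u (y i))
    (hbar : Fin C → ℕ → Fin f → ℝ)
    (hhbar : ∀ (c : Fin C) (K : ℕ),
      hbar c K = ((C : ℝ) / N) •
        ∑ i ∈ Finset.univ.filter (fun i => y i = c), (P ^ K * X) i) :
    ∀ (a b : Fin C) (K : ℕ),
      hbar a K - hbar b K =
        ((p + q) / (p + ((C : ℝ) - 1) * q)) ^ K • (u a - u b) := by
  intro a b K
  set m := N / C
  set s := p + ((C : ℝ) - 1) * q
  have hNm : (N : ℝ) = C * m := by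
    exact_mod_cast (by simpa using card_eq_card_mul_of_card_fiber hclass)
  have hCm : (C : ℝ) * m ≠ 0 := hNm ▸ Nat.cast_ne_zero.mpr hN.ne'
  set A : Matrix (Fin C) (Fin C) ℝ :=
    of fun c c' => if c = c' then C / (N * s) * p else -(C / (N * s) * q)
  have hPA : P = A.submatrix y y := ext hP
  have hXU : X = (of u).submatrix y id := ext fun i => congrFun (hX i)
  have hmA : m • A = ((p + q) / s) • 1 + replicateRow (Fin C) (fun _ => -(q / s)) := by
    have hmα : (m : ℝ) * (C / (N * s)) = s⁻¹ := by
      rw [hNm, ← mul_div_assoc, mul_comm (m : ℝ), div_mul_cancel_left₀ hCm]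
    ext c c'
    by_cases h : c = c' <;>
      simp [A, h, one_apply, replicateRow_apply, nsmul_eq_mul, ← mul_assoc, hmα] <;> ring
  have hmean : ∀ c, hbar c K = ((m • A) ^ K * of u) c := by
    intro c
    rw [hhbar, hPA, hXU, submatrix_pow_mul_submatrix_of_card_fiber hclass,
      sum_fiber_submatrix_of_card_fiber hclass, ← Nat.cast_smul_eq_nsmul ℝ, smul_smul, hNm,
      div_mul_eq_mul_div, div_self hCm, one_smul]
  rw [hmean, hmean, hmA, smul_one_add_replicateRow_pow_mul_sub]
  rfl

theorem stmt_2 (C N f : ℕ) (hC : 2 ≤ C) (hN : 0 < N) (hdvd : C ∣ N)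
    (y : Fin N → Fin C)
    (hclass : ∀ c : Fin C,
      (Finset.univ.filter (fun i => y i = c)).card = N / C)
    (p q : ℝ) (hp : 0 < p) (hq : 0 < q)
    (u : Fin C → Fin f → ℝ)
    (P : Matrix (Fin N) (Fin N) ℝ)
    (hP : ∀ i j, P i j =
      if y i = y j then ((C : ℝ) / (N * (p + ((C : ℝ) - 1) * q))) * p
      else -(((C : ℝ) / (N * (p + ((C : ℝ) - 1) * q))) * q))
    (X : Matrix (Fin N) (Fin f) ℝ)
    (hX : ∀ i, X i = u (y i))
    (hbar : Fin C → ℕ → Fin f → ℝ)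
    (hhbar : ∀ (c : Fin C) (K : ℕ),
      hbar c K = ((C : ℝ) / N) •
        ∑ i ∈ Finset.univ.filter (fun i => y i = c), (P ^ K * X) i) :
    ∀ (a b : Fin C) (K : ℕ),
      hbar a K - hbar b K =
        ((p + q) / (p + ((C : ℝ) - 1) * q)) ^ K • (u a - u b) :=
  stmt_2_general C N f hN y hclass p q u P hP X hX hbar hhbar
end

section
/- Let C ≥ 2 and f ≥ 1 be integers, let p, q be real numbers with p + (C−1)q ≠ 0, and let m : ℕ → Fin C → ℝ^f be a sequence of class-mean vectors satisfying the recursion m(k+1)(c) = (p · m(k)(c) − q · Σ_{c' ≠ c} m(k)(c')) / (p + (C−1)q) for all k ∈ ℕ and c ∈ Fin C. Then for all classes a, b ∈ Fin C and all K ∈ ℕ, m(K)(a) − m(K)(b) = ((p+q)/(p+(C−1)q))^K · (m(0)(a) − m(0)(b)). -/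
theorem stmt_3 (C f : ℕ) (hC : 2 ≤ C) (hf : 1 ≤ f) (p q : ℝ)
    (hpq : p + ((C : ℝ) - 1) * q ≠ 0)
    (m : ℕ → Fin C → Fin f → ℝ)
    (hrec : ∀ (k : ℕ) (c : Fin C),
      m (k + 1) c =
        (p + ((C : ℝ) - 1) * q)⁻¹ •
          (p • m k c - q • ∑ c' ∈ Finset.univ.erase c, m k c')) :
    ∀ (a b : Fin C) (K : ℕ),
      m K a - m K b =
        ((p + q) / (p + ((C : ℝ) - 1) * q)) ^ K • (m 0 a - m 0 b) := by
  intro a b K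
  induction K with
  | zero => simp
  | succ K ih =>
    have he : ∀ c : Fin C, (∑ c' ∈ Finset.univ.erase c, m K c')
        = (∑ c' ∈ Finset.univ, m K c') - m K c := fun c =>
      Finset.sum_erase_eq_sub (Finset.mem_univ c)
    rw [hrec K a, hrec K b, he a, he b]
    have : (p • m K a - q • (∑ c' ∈ Finset.univ, m K c' - m K a))
        - (p • m K b - q • (∑ c' ∈ Finset.univ, m K c' - m K b))
        = (p + q) • (m K a - m K b) := by
      ext i; simp [Pi.sub_apply, Pi.smul_apply, Finset.sum_apply]; ring
    rw [← smul_sub, this, ih, pow_succ, div_eq_mul_inv]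
    rw [smul_smul, smul_smul]
    ring_nf
end

section
/- Under the expected signed propagation dynamics (C dividing N, equal class sizes, p, q > 0, X with rows u_{y_i}, h̄_c^{(K)} = (C/N) Σ_{i : y_i = c} (P̄^K X)_i), if the number of classes satisfies C > 2, then the ratio r := (p+q)/(p+(C−1)q) satisfies 0 < r < 1, and consequently for any two classes a, b the distance of the class means ‖h̄_a^{(K)} − h̄_b^{(K)}‖ = r^K ‖u_a − u_b‖ decreases exponentially and tends to 0 as K → ∞; i.e., signed message passing suffers from oversmoothing in the multi-class case. -/
/-!
In the expected model `P̄ᵢₖ` depends only on whether `yᵢ = yₖ`, so on features that are a function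
of the label plus a label-independent column, `P̄` acts as `v ↦ r • v + const` with
`r = (N/C) · (C/(N s)) · (p + q) = (p + q) / s`, `s = p + (C-1) q`. Hence the `i`-th row of `P̄ᴷ X`
is `rᴷ u_{yᵢ} + β` with `β` independent of `i`, the class means differ by `rᴷ (u_a - u_b)`, and
`0 < r < 1` as soon as `C > 2`.
-/

open Finset

section Labeling

variable {ι κ : Type*} [Fintype ι] [DecidableEq κ] {y : ι → κ} {m : ℕ}

theorem sum_filter_label_eq_mul (g : κ → ℝ) {c : κ}
    (hm : (univ.filter (fun i => y i = c)).card = m) :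
    ∑ i ∈ univ.filter (fun i => y i = c), g (y i) = m * g c := by
  rw [sum_congr rfl fun i hi => by rw [(mem_filter.mp hi).2], sum_const, hm, nsmul_eq_mul]

theorem sum_label_eq_mul [Fintype κ] (g : κ → ℝ)
    (hm : ∀ c, (univ.filter (fun i => y i = c)).card = m) :
    ∑ i, g (y i) = m * ∑ c, g c := by
  rw [← sum_fiberwise univ y, mul_sum]
  exact sum_congr rfl fun c _ => sum_filter_label_eq_mul g (hm c)

theorem sum_mul_label_of_eq_ite [Fintype κ] (hm : ∀ c, (univ.filter (fun i => y i = c)).card = m)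
    {P : Matrix ι ι ℝ} {α γ : ℝ} (hP : ∀ i k, P i k = if y i = y k then α else -γ)
    (i : ι) (v : κ → ℝ) :
    ∑ k, P i k * v (y k) = m * (α + γ) * v (y i) - m * γ * ∑ c, v c := by
  have hsplit : ∀ k, P i k * v (y k) =
      (if y k = y i then (α + γ) * v (y k) else 0) - γ * v (y k) := by
    intro k
    rw [hP]
    by_cases h : y k = y i
    · simp only [h, if_true]
      ring
    · simp only [h, Ne.symm h, if_false]
      ring
  rw [sum_congr rfl fun k _ => hsplit k, sum_sub_distrib, ← sum_filter,
    sum_filter_label_eq_mul (fun c => (α + γ) * v c) (hm (y i)),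
    ← mul_sum, sum_label_eq_mul v hm]
  ring

end Labeling

theorem exists_pow_mul_apply_eq {ι κ n : Type*} [Fintype ι] [DecidableEq ι] [Fintype κ]
    {y : ι → κ} {P : Matrix ι ι ℝ} {ρ σ : ℝ}
    (hrow : ∀ i (v : κ → ℝ), ∑ k, P i k * v (y k) = ρ * v (y i) - σ * ∑ c, v c)
    {u : κ → n → ℝ} {X : Matrix ι n ℝ} (hX : ∀ i j, X i j = u (y i) j) (K : ℕ) :
    ∃ β : n → ℝ, ∀ i j, (P ^ K * X) i j = ρ ^ K * u (y i) j + β j := by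
  induction K with
  | zero => exact ⟨0, fun i j => by simp [hX]⟩
  | succ K ih =>
    obtain ⟨β, hβ⟩ := ih
    refine ⟨fun j => ρ * β j - σ * ∑ c, (ρ ^ K * u c j + β j), fun i j => ?_⟩
    rw [pow_succ', Matrix.mul_assoc, Matrix.mul_apply]
    simp only [hβ]
    rw [hrow i fun c => ρ ^ K * u c j + β j]
    ring

theorem div_pos_and_div_lt_one_of_two_lt {C p q : ℝ} (hC : 2 < C) (hp : 0 < p) (hq : 0 < q) :
    0 < (p + q) / (p + (C - 1) * q) ∧ (p + q) / (p + (C - 1) * q) < 1 := by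
  have hs : p + q < p + (C - 1) * q := by nlinarith
  exact ⟨div_pos (by linarith) (by linarith), (div_lt_one (by linarith)).mpr hs⟩

theorem stmt_4_general (C N f : ℕ) (hN : 0 < N) (hdvd : C ∣ N)
    (hC2 : 2 < C)
    (y : Fin N → Fin C)
    (hclass : ∀ c : Fin C,
      (Finset.univ.filter (fun i => y i = c)).card = N / C)
    (p q : ℝ) (hp : 0 < p) (hq : 0 < q)
    (u : Fin C → EuclideanSpace ℝ (Fin f))
    (P : Matrix (Fin N) (Fin N) ℝ)
    (hP : ∀ i j, P i j =
      if y i = y j then ((C : ℝ) / (N * (p + ((C : ℝ) - 1) * q))) * p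
      else -(((C : ℝ) / (N * (p + ((C : ℝ) - 1) * q))) * q))
    (X : Matrix (Fin N) (Fin f) ℝ)
    (hX : ∀ i j, X i j = u (y i) j)
    (hbar : Fin C → ℕ → EuclideanSpace ℝ (Fin f))
    (hhbar : ∀ (c : Fin C) (K : ℕ) (j : Fin f),
      hbar c K j = ((C : ℝ) / N) *
        ∑ i ∈ Finset.univ.filter (fun i => y i = c), (P ^ K * X) i j) :
    0 < (p + q) / (p + ((C : ℝ) - 1) * q) ∧
    (p + q) / (p + ((C : ℝ) - 1) * q) < 1 ∧
    ∀ a b : Fin C,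
      (∀ K : ℕ, ‖hbar a K - hbar b K‖ =
        ((p + q) / (p + ((C : ℝ) - 1) * q)) ^ K * ‖u a - u b‖) ∧
      Filter.Tendsto (fun K : ℕ => ‖hbar a K - hbar b K‖)
        Filter.atTop (nhds 0) := by
  obtain ⟨hr0, hr1⟩ :=
    div_pos_and_div_lt_one_of_two_lt (by exact_mod_cast hC2 : (2 : ℝ) < C) hp hq
  set s := p + ((C : ℝ) - 1) * q
  set r := (p + q) / s
  have hC0 : (C : ℝ) ≠ 0 := by positivity
  have hN0 : (N : ℝ) ≠ 0 := by positivity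
  have hm : ((N / C : ℕ) : ℝ) = N / C := Nat.cast_div hdvd hC0
  have hr : ((N / C : ℕ) : ℝ) * (C / (N * s) * p + C / (N * s) * q) = (p + q) / s := by
    rw [hm]
    field_simp
  obtain ⟨σ, hrow⟩ : ∃ σ : ℝ, ∀ i (v : Fin C → ℝ),
      ∑ k, P i k * v (y k) = r * v (y i) - σ * ∑ c, v c :=
    ⟨_, fun i v => by rw [sum_mul_label_of_eq_ite hclass hP i v, hr]⟩
  have hmean (K : ℕ) : ∃ β : Fin f → ℝ, ∀ c j, hbar c K j = r ^ K * u c j + β j := by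
    obtain ⟨β, hβ⟩ := exists_pow_mul_apply_eq (u := fun c j => u c j) hrow hX K
    refine ⟨β, fun c j => ?_⟩
    simp only [hhbar, hβ]
    rw [sum_filter_label_eq_mul (fun c => r ^ K * u c j + β j) (hclass c), hm]
    field_simp
  have hdist (a b : Fin C) (K : ℕ) : ‖hbar a K - hbar b K‖ = r ^ K * ‖u a - u b‖ := by
    obtain ⟨β, hβ⟩ := hmean K
    have : hbar a K - hbar b K = r ^ K • (u a - u b) := by
      ext j
      simp only [PiLp.sub_apply, PiLp.smul_apply, hβ, smul_eq_mul]
      ring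
    rw [this, norm_smul, Real.norm_of_nonneg (by positivity)]
  refine ⟨hr0, hr1, fun a b => ⟨hdist a b, ?_⟩⟩
  simp only [hdist]
  simpa using (tendsto_pow_atTop_nhds_zero_of_lt_one hr0.le hr1).mul_const ‖u a - u b‖

theorem stmt_4 (C N f : ℕ) (hC : 2 ≤ C) (hN : 0 < N) (hdvd : C ∣ N)
    (hC2 : 2 < C)
    (y : Fin N → Fin C)
    (hclass : ∀ c : Fin C,
      (Finset.univ.filter (fun i => y i = c)).card = N / C)
    (p q : ℝ) (hp : 0 < p) (hq : 0 < q)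
    (u : Fin C → EuclideanSpace ℝ (Fin f))
    (P : Matrix (Fin N) (Fin N) ℝ)
    (hP : ∀ i j, P i j =
      if y i = y j then ((C : ℝ) / (N * (p + ((C : ℝ) - 1) * q))) * p
      else -(((C : ℝ) / (N * (p + ((C : ℝ) - 1) * q))) * q))
    (X : Matrix (Fin N) (Fin f) ℝ)
    (hX : ∀ i j, X i j = u (y i) j)
    (hbar : Fin C → ℕ → EuclideanSpace ℝ (Fin f))
    (hhbar : ∀ (c : Fin C) (K : ℕ) (j : Fin f),
      hbar c K j = ((C : ℝ) / N) *
        ∑ i ∈ Finset.univ.filter (fun i => y i = c), (P ^ K * X) i j) :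
    0 < (p + q) / (p + ((C : ℝ) - 1) * q) ∧
    (p + q) / (p + ((C : ℝ) - 1) * q) < 1 ∧
    ∀ a b : Fin C,
      (∀ K : ℕ, ‖hbar a K - hbar b K‖ =
        ((p + q) / (p + ((C : ℝ) - 1) * q)) ^ K * ‖u a - u b‖) ∧
      Filter.Tendsto (fun K : ℕ => ‖hbar a K - hbar b K‖)
        Filter.atTop (nhds 0) :=
  stmt_4_general C N f hN hdvd hC2 y hclass p q hp hq u P hP X hX hbar hhbar
end

section
/- Under the expected signed propagation dynamics (C dividing N, equal class sizes, p, q > 0, X with rows u_{y_i}, h̄_c^{(K)} = (C/N) Σ_{i : y_i = c} (P̄^K X)_i), if the number of classes is C = 2 with the two classes a ≠ b, then for every K ∈ ℕ the difference of class means is exactly preserved: h̄_a^{(K)} − h̄_b^{(K)} = u_a − u_b; i.e., in the binary case signed message passing does not suffer from oversmoothing. -/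
/-!
With `e_c` the indicator vector of class `c`, the row vector `e_a - e_b` is a left eigenvector
of `P̄`: summing the rows of `P̄` over one class of size `N/2` gives `(N/2)(α e_a + β e_b)`, where
`α, β` are the in-class and cross-class entries, so `(e_a - e_b) P̄ = (N/2)(α - β)(e_a - e_b)`,
and `(N/2)(α - β) = 1` for the normalisation of `P̄`. Hence `(e_a - e_b) P̄^K X = (e_a - e_b) X`,
which is `N/2` times `u_a - u_b`.
-/

open Finset

namespace Matrix

variable {ι κ n R : Type*} [Fintype ι] [DecidableEq κ] [CommRing R]

def classIndicator (y : ι → κ) (c : κ) : ι → R := fun i => if y i = c then 1 else 0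

theorem sum_filter_eq_classIndicator_vecMul (y : ι → κ) (c : κ) (M : Matrix ι n R) :
    ∑ i ∈ univ.filter (fun i => y i = c), M i = classIndicator y c ᵥ* M := by
  refine (sum_filter _ _).trans ((sum_congr rfl fun i _ => ?_).trans (vecMul_eq_sum _ M).symm)
  split_ifs <;> simp [classIndicator, *]

theorem classIndicator_vecMul_of_rows {y : ι → κ} {c : κ} {m : ℕ} {u : κ → n → R}
    {X : Matrix ι n R} (hX : ∀ i, X i = u (y i))
    (hcard : #(univ.filter (fun i => y i = c)) = m) :
    classIndicator y c ᵥ* X = (m : R) • u c := by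
  calc classIndicator y c ᵥ* X = ∑ i ∈ univ.filter (fun i => y i = c), X i :=
        (sum_filter_eq_classIndicator_vecMul y c X).symm
    _ = ∑ i ∈ univ.filter (fun i => y i = c), u c :=
        sum_congr rfl fun i hi => by rw [hX i, (mem_filter.mp hi).2]
    _ = (m : R) • u c := by rw [sum_const, hcard, Nat.cast_smul_eq_nsmul]

section TwoClasses

variable {y : ι → κ} {a b : κ} {m : ℕ} {α β : R} {P : Matrix ι ι R}

theorem classIndicator_vecMul_of_two_classes (hab : a ≠ b) (hy : ∀ i, y i = a ∨ y i = b)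
    (hP : ∀ i j, P i j = if y i = y j then α else β)
    (hcard : #(univ.filter (fun i => y i = a)) = m) :
    classIndicator y a ᵥ* P = (m : R) • (α • classIndicator y a + β • classIndicator y b) := by
  ext j
  have hcol : ∑ i ∈ univ.filter (fun i => y i = a), P i j = m * (if y j = a then α else β) := by
    rw [← hcard, ← nsmul_eq_mul, ← sum_const]
    refine sum_congr rfl fun i hi => ?_
    rw [hP, (mem_filter.mp hi).2]
    exact if_congr eq_comm rfl rfl
  simp only [vecMul, dotProduct, classIndicator, ite_mul, one_mul, zero_mul, ← sum_filter]
  rw [hcol]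
  rcases hy j with h | h <;> simp [classIndicator, h, hab, Ne.symm hab]

theorem classIndicator_sub_vecMul (hab : a ≠ b) (hy : ∀ i, y i = a ∨ y i = b)
    (hP : ∀ i j, P i j = if y i = y j then α else β)
    (hcard : ∀ c, #(univ.filter (fun i => y i = c)) = m) :
    (classIndicator y a - classIndicator y b) ᵥ* P =
      ((m : R) * (α - β)) • (classIndicator y a - classIndicator y b) := by
  rw [sub_vecMul, classIndicator_vecMul_of_two_classes hab hy hP (hcard a),
    classIndicator_vecMul_of_two_classes (Ne.symm hab) (fun i => (hy i).symm) hP (hcard b)]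
  module

theorem classIndicator_sub_vecMul_pow [DecidableEq ι] (hab : a ≠ b) (hy : ∀ i, y i = a ∨ y i = b)
    (hP : ∀ i j, P i j = if y i = y j then α else β)
    (hcard : ∀ c, #(univ.filter (fun i => y i = c)) = m) (K : ℕ) :
    (classIndicator y a - classIndicator y b) ᵥ* (P ^ K) =
      ((m : R) * (α - β)) ^ K • (classIndicator y a - classIndicator y b) := by
  induction K with
  | zero => simp
  | succ K ih =>
    rw [pow_succ, ← vecMul_vecMul, ih, smul_vecMul, classIndicator_sub_vecMul hab hy hP hcard,
      smul_smul, pow_succ]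

end TwoClasses

end Matrix

theorem Fin.eq_or_eq_of_ne {a b : Fin 2} (hab : a ≠ b) (x : Fin 2) : x = a ∨ x = b := by
  omega

open Matrix in
theorem stmt_5 (N f : ℕ) (hN : 0 < N) (hdvd : 2 ∣ N)
    (y : Fin N → Fin 2)
    (hclass : ∀ c : Fin 2,
      (Finset.univ.filter (fun i => y i = c)).card = N / 2)
    (p q : ℝ) (hp : 0 < p) (hq : 0 < q)
    (u : Fin 2 → Fin f → ℝ)
    (P : Matrix (Fin N) (Fin N) ℝ)
    (hP : ∀ i j, P i j =
      if y i = y j then (((2 : ℕ) : ℝ) / (N * (p + (((2 : ℕ) : ℝ) - 1) * q))) * p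
      else -((((2 : ℕ) : ℝ) / (N * (p + (((2 : ℕ) : ℝ) - 1) * q))) * q))
    (X : Matrix (Fin N) (Fin f) ℝ)
    (hX : ∀ i, X i = u (y i))
    (hbar : Fin 2 → ℕ → Fin f → ℝ)
    (hhbar : ∀ (c : Fin 2) (K : ℕ),
      hbar c K = (((2 : ℕ) : ℝ) / N) •
        ∑ i ∈ Finset.univ.filter (fun i => y i = c), (P ^ K * X) i)
    (a b : Fin 2) (hab : a ≠ b) :
    ∀ K : ℕ, hbar a K - hbar b K = u a - u b := by
  intro K
  have hhalf : ((N / 2 : ℕ) : ℝ) = N / 2 := Nat.cast_div hdvd two_ne_zero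
  have heigenvalue : ((N / 2 : ℕ) : ℝ) * ((2 : ℕ) / (N * (p + ((2 : ℕ) - 1) * q)) * p
      - -((2 : ℕ) / (N * (p + ((2 : ℕ) - 1) * q)) * q)) = 1 := by
    have : p + q ≠ 0 := (add_pos hp hq).ne'
    have : (N : ℝ) ≠ 0 := by exact_mod_cast hN.ne'
    rw [hhalf]
    field_simp
    ring
  have hpow := classIndicator_sub_vecMul_pow hab (fun i : Fin N => Fin.eq_or_eq_of_ne hab (y i))
    hP hclass K
  rw [heigenvalue, one_pow, one_smul] at hpow
  rw [hhbar, hhbar, sum_filter_eq_classIndicator_vecMul, sum_filter_eq_classIndicator_vecMul,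
    ← smul_sub, ← sub_vecMul, ← vecMul_vecMul, hpow, sub_vecMul,
    classIndicator_vecMul_of_rows hX (hclass a), classIndicator_vecMul_of_rows hX (hclass b),
    ← smul_sub, smul_smul, hhalf]
  field_simp
  simp
end

section
/- For every D ∈ ℕ, every vertex i ∈ V, and every label sequence s = (s_1, …, s_D) ∈ (Fin C)^D, the component of the D-layer embedding satisfies h_D(i)(s) = Σ over all walks i = v_0, v_1, …, v_D in G (with v_m adjacent to v_{m−1} for each m) such that y(v_m) = s_m for all 1 ≤ m ≤ D, of (L_D ∘ ⋯ ∘ L_1)(h₀(v_D)). In particular, every vertex whose initial feature contributes to the component of h_D(i) indexed by s has class s_D, so stacking one-hop desirable multiset-to-multiset message-passing layers yields a desirable multi-hop message passing: each output component aggregates only D-hop neighbors of a single class. -/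
theorem stmt_6 {V : Type} [Fintype V] [DecidableEq V]
    (G : SimpleGraph V) [DecidableRel G.Adj]
    (C d₀ : ℕ) (y : V → Fin C)
    (h₀ : V → Fin d₀ → ℝ)
    (L : ℕ → (Fin d₀ → ℝ) →ₗ[ℝ] (Fin d₀ → ℝ))
    (h : (k : ℕ) → V → (Fin k → Fin C) → (Fin d₀ → ℝ))
    (hbase : ∀ (i : V) (s : Fin 0 → Fin C), h 0 i s = h₀ i)
    (hrec : ∀ (k : ℕ) (i : V) (t : Fin C) (s : Fin k → Fin C),
      h (k + 1) i (Fin.cons t s) =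
        ∑ j ∈ (G.neighborFinset i).filter (fun j => y j = t),
          L (k + 1) (h k j s))
    (Lcomp : ℕ → (Fin d₀ → ℝ) →ₗ[ℝ] (Fin d₀ → ℝ))
    (hL0 : Lcomp 0 = LinearMap.id)
    (hLs : ∀ k : ℕ, Lcomp (k + 1) = (L (k + 1)).comp (Lcomp k)) :
    ∀ (D : ℕ) (i : V) (s : Fin D → Fin C),
      h D i s =
        ∑ v ∈ Finset.univ.filter (fun v : Fin (D + 1) → V =>
            v 0 = i ∧ (∀ m : Fin D, G.Adj (v m.castSucc) (v m.succ)) ∧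
            (∀ m : Fin D, y (v m.succ) = s m)),
          Lcomp D (h₀ (v (Fin.last D))) := by
  intro D
  induction D with
  | zero =>
    intro i s
    have hset : (Finset.univ.filter (fun v : Fin 1 → V =>
        v 0 = i ∧ (∀ m : Fin 0, G.Adj (v m.castSucc) (v m.succ)) ∧
        (∀ m : Fin 0, y (v m.succ) = s m))) = {fun _ => i} := by
      ext v
      simp only [Finset.mem_filter, Finset.mem_univ, true_and, Finset.mem_singleton]
      constructor
      · rintro ⟨hv, -, -⟩
        funext k
        have : k = 0 := Subsingleton.elim _ _
        rw [this, hv]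
      · rintro rfl
        exact ⟨rfl, fun m => m.elim0, fun m => m.elim0⟩
    rw [hbase, hset, Finset.sum_singleton, hL0]
    rfl
  | succ D IH =>
    intro i s
    have key := hrec D i (s 0) (Fin.tail s)
    rw [Fin.cons_self_tail] at key
    rw [key]
    have hLc : ∀ x, L (D + 1) (Lcomp D x) = Lcomp (D + 1) x := by
      intro x; rw [hLs D]; rfl
    simp_rw [IH, map_sum, hLc]
    rw [Finset.sum_sigma']
    refine Finset.sum_nbij' (fun p => Fin.cons i p.2) (fun v => ⟨v 1, Fin.tail v⟩)
      ?_ ?_ ?_ ?_ ?_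
    · rintro ⟨j, w⟩ hp
      simp only [Finset.mem_sigma, Finset.mem_filter, Finset.mem_univ, true_and,
        SimpleGraph.mem_neighborFinset] at hp
      obtain ⟨⟨hadj, hy⟩, hw0, hwadj, hwy⟩ := hp
      simp only [Finset.mem_filter, Finset.mem_univ, true_and]
      refine ⟨Fin.cons_zero _ _, ?_, ?_⟩
      · intro m
        refine Fin.cases ?_ ?_ m
        · rw [Fin.castSucc_zero, Fin.cons_zero, Fin.cons_succ, hw0]
          exact hadj
        · intro k
          rw [← Fin.succ_castSucc, Fin.cons_succ, Fin.cons_succ]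
          exact hwadj k
      · intro m
        refine Fin.cases ?_ ?_ m
        · rw [Fin.cons_succ, hw0]
          exact hy
        · intro k
          rw [Fin.cons_succ]
          exact hwy k
    · intro v hv
      simp only [Finset.mem_filter, Finset.mem_univ, true_and] at hv
      obtain ⟨hv0, hvadj, hvy⟩ := hv
      simp only [Finset.mem_sigma, Finset.mem_filter, Finset.mem_univ, true_and,
        SimpleGraph.mem_neighborFinset]
      refine ⟨⟨?_, ?_⟩, rfl, ?_, ?_⟩
      · have := hvadj 0
        rwa [Fin.castSucc_zero, hv0, Fin.succ_zero_eq_one] at this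
      · have := hvy 0
        rwa [Fin.succ_zero_eq_one] at this
      · intro m
        have := hvadj m.succ
        rwa [← Fin.succ_castSucc] at this
      · intro m
        exact hvy m.succ
    · rintro ⟨j, w⟩ hp
      simp only [Finset.mem_sigma, Finset.mem_filter, Finset.mem_univ, true_and] at hp
      obtain ⟨-, hw0, -, -⟩ := hp
      have h1 : Fin.cons (α := fun _ : Fin (D + 2) => V) i w 1 = j := by
        rw [Fin.cons_one, hw0]
      have h2 : Fin.tail (Fin.cons (α := fun _ : Fin (D + 2) => V) i w) = w :=
        Fin.tail_cons (α := fun _ : Fin (D + 2) => V) i w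
      exact Sigma.ext h1 (heq_of_eq h2)
    · intro v hv
      simp only [Finset.mem_filter, Finset.mem_univ, true_and] at hv
      show Fin.cons i (Fin.tail v) = v
      rw [← hv.1]
      exact Fin.cons_self_tail v
    · rintro ⟨j, w⟩ hp
      have hc : Fin.cons (α := fun _ : Fin (D + 2) => V) i w (Fin.last (D + 1)) =
          w (Fin.last D) := Fin.cons_succ (α := fun _ : Fin (D + 2) => V) i w (Fin.last D)
      exact congrArg (fun z => (Lcomp (D + 1)) (h₀ z)) hc.symm
end

section
/- Let C ≥ 2 and d ≥ 1 be integers, let p, q > 0 be real numbers with p ≠ q, and let m : Fin C → ℝ^d be class-mean vectors. Suppose two distinct classes a ≠ b have equal nonzero means: m(a) = m(b) and m(a) ≠ 0. Define for each class c the multiset-to-multiset (concatenation) update M_c : Fin C → ℝ^d by M_c(t) = (w_{c,t}/(p+(C−1)q)) · m(t), where w_{c,c} = p and w_{c,t} = q for t ≠ c, and define the signed message passing update S_c := (p · m(c) − q · Σ_{t ≠ c} m(t)) / (p+(C−1)q) ∈ ℝ^d. Then M_a ≠ M_b, whereas S_a = S_b. That is, one step of multiset-to-multiset message passing separates the two class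 means even after they have collapsed to the same point, while signed message passing keeps them equal and remains trapped in oversmoothing. -/
theorem stmt_9 (C d : ℕ) (hC : 2 ≤ C) (hd : 1 ≤ d)
    (p q : ℝ) (hp : 0 < p) (hq : 0 < q) (hpq : p ≠ q)
    (m : Fin C → Fin d → ℝ) (a b : Fin C) (hab : a ≠ b)
    (hmeq : m a = m b) (hmne : m a ≠ 0)
    (M : Fin C → Fin C → Fin d → ℝ)
    (hM : ∀ c t : Fin C,
      M c t = ((if t = c then p else q) / (p + ((C : ℝ) - 1) * q)) • m t)
    (S : Fin C → Fin d → ℝ)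
    (hS : ∀ c : Fin C,
      S c = (p + ((C : ℝ) - 1) * q)⁻¹ •
        (p • m c - q • ∑ t ∈ Finset.univ.erase c, m t)) :
    M a ≠ M b ∧ S a = S b := by
  have hD : (0 : ℝ) < p + ((C : ℝ) - 1) * q := by
    have : (1 : ℝ) ≤ (C : ℝ) - 1 := by
      have : (2 : ℝ) ≤ (C : ℝ) := by exact_mod_cast hC
      linarith
    nlinarith
  constructor
  · intro h
    have h1 : M a a = M b a := by rw [h]
    rw [hM a a, hM b a, if_pos rfl, if_neg hab] at h1
    have := smul_right_injective (Fin d → ℝ)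
      (show (p / (p + ((C : ℝ) - 1) * q) - q / (p + ((C : ℝ) - 1) * q)) ≠ 0 by
        rw [div_sub_div_same]
        exact div_ne_zero (sub_ne_zero.mpr hpq) hD.ne')
    have h2 : (p / (p + ((C : ℝ) - 1) * q) - q / (p + ((C : ℝ) - 1) * q)) • m a = 0 := by
      rw [sub_smul, h1, sub_self]
    exact hmne (by simpa using this (by simpa using h2))
  · have key : ∀ c : Fin C, ∑ t ∈ Finset.univ.erase c, m t = (∑ t, m t) - m c := by
      intro c
      rw [Finset.sum_erase_eq_sub (Finset.mem_univ c)]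
    rw [hS a, hS b, key a, key b, hmeq]
end

section
/- For every σ > 0 and r > 0 there exists a constant κ = κ(σ, r) > 0 such that the following holds for every signed CSBM instance (any N, C, equal-class-size labeling y, and p, q ∈ (0,1)) whose expected degree satisfies d̄ ≥ κ · log N: with probability at least 1 − 2N^{−r}, the ℓ2 operator norm of the deviation of the signed adjacency matrix from its expectation satisfies ‖A − Ā‖ ≤ σ · d̄, where Ā ∈ ℝ^{N×N} is the expectation matrix given by Ā_{ij} = p if y_i = y_j and Ā_{ij} = −q if y_i ≠ y_j. -/
open MeasureTheory

/-- Index type for unordered pairs `(i, j)` with `i ≤ j` over `Fin N`. -/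
abbrev PairIdx (N : ℕ) : Type := {ij : Fin N × Fin N // ij.1 ≤ ij.2}

/-- Bernoulli measure on `Bool` with success probability `p`. -/
noncomputable def bernoulliMeasure (p : ℝ) : Measure Bool :=
  ENNReal.ofReal p • Measure.dirac true +
    ENNReal.ofReal (1 - p) • Measure.dirac false

/-- The signed CSBM measure: the product over all pairs `i ≤ j` of Bernoulli
measures with parameter `p` for intra-class pairs and `q` for inter-class pairs. -/
noncomputable def csbmMeasure (N C : ℕ) (y : Fin N → Fin C) (p q : ℝ) :
    Measure (PairIdx N → Bool) :=
  Measure.pi fun ij =>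
    bernoulliMeasure (if y ij.val.1 = y ij.val.2 then p else q)

/-- The random signed adjacency matrix of the signed CSBM. -/
noncomputable def csbmMatrix (N C : ℕ) (y : Fin N → Fin C)
    (ω : PairIdx N → Bool) : Matrix (Fin N) (Fin N) ℝ :=
  fun i j =>
    if h : i ≤ j then
      (if ω ⟨(i, j), h⟩ then (if y i = y j then 1 else -1) else 0)
    else
      (if ω ⟨(j, i), (le_total i j).resolve_left h⟩ then (if y i = y j then 1 else -1) else 0)

/-- The expected degree `d̄ = (N/C)·p + (N − N/C)·q`. -/
noncomputable def expectedDegree (N C : ℕ) (p q : ℝ) : ℝ :=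
  ((N : ℝ) / C) * p + ((N : ℝ) - (N : ℝ) / C) * q

/-- The expectation matrix `Ā` with `Ā i j = p` if `y i = y j` and `-q` otherwise. -/
noncomputable def csbmExpectedMatrix (N C : ℕ) (y : Fin N → Fin C) (p q : ℝ) :
    Matrix (Fin N) (Fin N) ℝ :=
  fun i j => if y i = y j then p else -q

/-- The ℓ2 operator (spectral) norm of a real square matrix. -/
noncomputable def l2OpNorm {N : ℕ} (M : Matrix (Fin N) (Fin N) ℝ) : ℝ :=
  ‖Matrix.toEuclideanCLM (𝕜 := ℝ) M‖

/-!
Trace method. Write `X = A - Ā`: a symmetric matrix whose entries above the diagonal are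
independent and centred. For `k = 2 ^ m` the C*-identity and the Frobenius bound give
`‖X‖ ^ (2k) ≤ tr X ^ (2k)`, and `E tr X ^ (2k)` is a sum over closed walks of length `2k` of
products of centred moments of the edge variables. Such a product vanishes unless every edge is
traversed at least twice, so the walk discovers a new vertex at most `k` times. Charging a
discovery step the edge probability (rows of which sum to `d̄`) and any other step one of at
most `2k` visited vertices gives `E tr X ^ (2k) ≤ N (8 k d̄) ^ k`. Markov's inequality with
`k ≈ log N` and `d̄ ≥ κ log N` bounds `P(‖X‖ > σ d̄)` by `N (8k / (σ² d̄)) ^ k ≤ N ^ (-r)`.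
-/

open Finset MeasureTheory

section SpectralNorm

open Matrix
open scoped Matrix.Norms.L2Operator

variable {m n : Type*} [Fintype m] [Fintype n] [DecidableEq n]

theorem Matrix.l2_opNorm_le_sqrt_sum_sq (A : Matrix m n ℝ) :
    ‖A‖ ≤ √(∑ i, ∑ j, A i j ^ 2) := by
  refine ContinuousLinearMap.opNorm_le_bound _ (by positivity) fun v => ?_
  rw [← Real.sqrt_sq (norm_nonneg v), ← Real.sqrt_mul (by positivity),
    ← Real.sqrt_sq (norm_nonneg _)]
  refine Real.sqrt_le_sqrt ?_
  simp only [EuclideanSpace.norm_sq_eq, Real.norm_eq_abs, sq_abs]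
  rw [sum_mul]
  refine sum_le_sum fun i _ => ?_
  simpa [Matrix.toEuclideanLin, Matrix.mulVec, dotProduct] using
    sum_mul_sq_le_sq_mul_sq univ (A i) (fun j => v j)

theorem Matrix.IsHermitian.trace_pow_two_mul {A : Matrix n n ℝ} (hA : A.IsHermitian) (k : ℕ) :
    (A ^ (2 * k)).trace = ∑ i, ∑ j, (A ^ k) i j ^ 2 := by
  have hAk : (A ^ k)ᵀ = A ^ k := by simpa using (hA.pow k).eq
  rw [two_mul, pow_add, Matrix.trace]
  refine sum_congr rfl fun i _ => ?_
  simp only [Matrix.diag_apply, Matrix.mul_apply, sq]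
  refine sum_congr rfl fun j _ => ?_
  rw [← Matrix.transpose_apply (A ^ k) j i, hAk]

theorem Matrix.IsHermitian.l2_opNorm_pow_le_trace {A : Matrix n n ℝ} (hA : A.IsHermitian)
    (m : ℕ) : ‖A‖ ^ (2 * 2 ^ m) ≤ (A ^ (2 * 2 ^ m)).trace := by
  rw [hA.trace_pow_two_mul, mul_comm, pow_mul,
    ← (Matrix.isHermitian_iff_isSelfAdjoint.mp hA).norm_pow_two_pow m]
  calc ‖A ^ 2 ^ m‖ ^ 2 ≤ √(∑ i, ∑ j, (A ^ 2 ^ m) i j ^ 2) ^ 2 := by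
        gcongr; exact (A ^ 2 ^ m).l2_opNorm_le_sqrt_sum_sq
    _ = _ := Real.sq_sqrt (by positivity)

end SpectralNorm

section Markov

open scoped Matrix.Norms.L2Operator

variable {Ω n : Type*} [MeasurableSpace Ω] {μ : Measure Ω} [IsFiniteMeasure μ]
  [Fintype n] [DecidableEq n]

theorem mul_measureReal_lt_l2_opNorm_le_integral_trace {X : Ω → Matrix n n ℝ}
    (hX : ∀ ω, (X ω).IsHermitian) (m : ℕ)
    (hint : Integrable (fun ω => (X ω ^ (2 * 2 ^ m)).trace) μ) {t : ℝ} (ht : 0 ≤ t) :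
    t ^ (2 * 2 ^ m) * μ.real {ω | t < ‖X ω‖} ≤ ∫ ω, (X ω ^ (2 * 2 ^ m)).trace ∂μ := by
  have hle : ∀ ω, ‖X ω‖ ^ (2 * 2 ^ m) ≤ (X ω ^ (2 * 2 ^ m)).trace :=
    fun ω => (hX ω).l2_opNorm_pow_le_trace m
  calc t ^ (2 * 2 ^ m) * μ.real {ω | t < ‖X ω‖}
      ≤ t ^ (2 * 2 ^ m) * μ.real {ω | t ^ (2 * 2 ^ m) ≤ (X ω ^ (2 * 2 ^ m)).trace} := by
        refine mul_le_mul_of_nonneg_left (measureReal_mono fun ω hω => ?_) (by positivity)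
        exact (pow_le_pow_left₀ ht (le_of_lt hω) _).trans (hle ω)
    _ ≤ ∫ ω, (X ω ^ (2 * 2 ^ m)).trace ∂μ :=
        mul_meas_ge_le_integral_of_nonneg
          (Filter.Eventually.of_forall fun ω => (by positivity : (0:ℝ) ≤ _).trans (hle ω)) hint _

end Markov

namespace Matrix

variable {V : Type*}

def walkWeight (M : Matrix V V ℝ) {L : ℕ} (w : Fin (L + 1) → V) : ℝ :=
  ∏ t : Fin L, M (w t.castSucc) (w t.succ)

lemma walkWeight_cons (M : Matrix V V ℝ) {L : ℕ} (a : V) (w : Fin (L + 1) → V) :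
    walkWeight M (Fin.cons a w : Fin (L + 2) → V) = M a (w 0) * walkWeight M w := by
  simp only [walkWeight, Fin.prod_univ_succ, Fin.cons_succ, ← Fin.succ_castSucc]
  rfl

variable [Fintype V] [DecidableEq V]

theorem pow_apply_eq_sum_walkWeight (M : Matrix V V ℝ) (L : ℕ) (a b : V) :
    (M ^ L) a b = ∑ w : Fin (L + 1) → V with w 0 = a ∧ w (Fin.last L) = b, walkWeight M w := by
  induction L generalizing a with
  | zero =>
    rw [pow_zero, one_apply, sum_filter, Fintype.sum_eq_single (fun _ => a)]
    · simp [walkWeight, eq_comm]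
    · intro w hw
      rw [if_neg fun h => hw (funext fun t => by rw [Fin.fin_one_eq_zero t, h.1])]
  | succ L ih =>
    rw [sum_filter, ← (Fin.consEquiv fun _ => V).sum_comp, Fintype.sum_prod_type]
    simp only [Fin.consEquiv, Equiv.coe_fn_mk, Fin.cons_zero, ← Fin.succ_last, Fin.cons_succ,
      walkWeight_cons]
    rw [Fintype.sum_eq_single a (fun a' ha' => sum_eq_zero fun w _ => if_neg fun h => ha' h.1)]
    simp only [true_and, pow_succ', mul_apply, ih, mul_sum, ← sum_filter]
    rw [← sum_fiberwise _ fun w : Fin (L + 1) → V => w 0]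
    refine sum_congr rfl fun x _ => ?_
    rw [filter_filter]
    refine sum_congr (filter_congr fun _ _ => and_comm) fun w hw => ?_
    rw [(mem_filter.mp hw).2.2]

theorem trace_pow_eq_sum_walkWeight (M : Matrix V V ℝ) (L : ℕ) :
    (M ^ L).trace = ∑ w : Fin (L + 1) → V with w (Fin.last L) = w 0, walkWeight M w := by
  rw [trace, ← sum_fiberwise (s := univ.filter _) (g := fun w : Fin (L + 1) → V => w 0)]
  refine sum_congr rfl fun a _ => ?_
  rw [diag_apply, pow_apply_eq_sum_walkWeight, filter_filter]
  refine sum_congr (filter_congr fun w _ => ?_) fun _ _ => rfl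
  constructor
  · rintro ⟨rfl, h⟩; exact ⟨h, rfl⟩
  · rintro ⟨h, rfl⟩; exact ⟨rfl, h⟩

end Matrix

lemma prod_ite_le_pow_mul_pow {ι : Type*} [Fintype ι] {P : ι → Prop} [DecidablePred P]
    {A B : ℝ} (hB : 0 ≤ B) (hBA : B ≤ A) {k : ℕ} (hι : Fintype.card ι = 2 * k)
    (hP : #{i | P i} ≤ k) : ∏ i, (if P i then A else B) ≤ A ^ k * B ^ k := by
  have hsplit : #{i | P i} + #{i | ¬P i} = 2 * k := by
    rw [card_filter_add_card_filter_not, card_univ, hι]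
  rw [prod_ite, prod_const, prod_const]
  calc A ^ #{i | P i} * B ^ #{i | ¬P i}
      = A ^ #{i | P i} * B ^ (k - #{i | P i}) * B ^ k := by
        rw [mul_assoc, ← pow_add]; congr 2; omega
    _ ≤ A ^ #{i | P i} * A ^ (k - #{i | P i}) * B ^ k := by
        have : 0 ≤ A := hB.trans hBA
        gcongr
    _ = A ^ k * B ^ k := by rw [← pow_add]; congr 2; omega

namespace TupleWalk

variable {V : Type*} [DecidableEq V] {L : ℕ}

def edge (w : Fin (L + 1) → V) (t : Fin L) : Sym2 V := s(w t.castSucc, w t.succ)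

def edgeMult (w : Fin (L + 1) → V) (e : Sym2 V) : ℕ := #{t | edge w t = e}

def visited (w : Fin (L + 1) → V) (t : Fin L) : Finset V := (Iic t.castSucc).image w

def newSteps (w : Fin (L + 1) → V) : Finset (Fin L) := {t | w t.succ ∉ visited w t}

lemma prod_edge_eq_prod_pow {M : Type*} [CommMonoid M] [Fintype V] (F : Sym2 V → M)
    (w : Fin (L + 1) → V) : ∏ t, F (edge w t) = ∏ e, F e ^ edgeMult w e := by
  rw [← prod_fiberwise univ (edge w)]
  refine prod_congr rfl fun e _ => ?_
  rw [prod_congr rfl fun t ht => by rw [(mem_filter.mp ht).2], prod_const]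
  rfl

lemma edge_injOn_newSteps (w : Fin (L + 1) → V) : Set.InjOn (edge w) (newSteps w) := by
  suffices h : ∀ t t', t' ∈ newSteps w → t < t' → edge w t ≠ edge w t' by
    intro t ht t' ht' he
    by_contra hne
    rcases lt_or_gt_of_ne hne with hlt | hlt
    exacts [h t t' ht' hlt he, h t' t ht hlt he.symm]
  intro t t' ht' hlt he
  have hmem : w t'.succ ∈ edge w t := he ▸ Sym2.mem_mk_right _ _
  refine (mem_filter.mp ht').2 (mem_image.mpr ?_)
  rcases Sym2.mem_iff.mp hmem with h | h
  · exact ⟨t.castSucc, mem_Iic.mpr (Fin.castSucc_le_castSucc_iff.mpr hlt.le), h.symm⟩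
  · exact ⟨t.succ, mem_Iic.mpr (Fin.succ_le_castSucc_iff.mpr hlt), h.symm⟩

lemma two_mul_card_newSteps_le [Fintype V] {w : Fin (L + 1) → V}
    (hw : ∀ e, edgeMult w e ≠ 1) : 2 * #(newSteps w) ≤ L := by
  have hused : 2 * #(univ.image (edge w)) ≤ L := by
    calc 2 * #(univ.image (edge w)) = ∑ _e ∈ univ.image (edge w), 2 := by
          rw [sum_const, smul_eq_mul, mul_comm]
      _ ≤ ∑ e ∈ univ.image (edge w), edgeMult w e := sum_le_sum fun e he => by
          obtain ⟨t, -, rfl⟩ := mem_image.mp he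
          have : 0 < edgeMult w (edge w t) := card_pos.mpr ⟨t, by simp⟩
          have := hw (edge w t)
          omega
      _ = #(univ : Finset (Fin L)) := (card_eq_sum_card_image (edge w) univ).symm
      _ = L := by simp
  have hnew : #(newSteps w) ≤ #(univ.image (edge w)) := by
    rw [← card_image_of_injOn (edge_injOn_newSteps w)]
    exact card_le_card (image_subset_image (subset_univ _))
  omega

/-- The steps in `S` are charged `π` of their edge; every other step must return to a vertex
visited before. Steps are indexed by `ℕ` so that one `S` serves walks of every length, as the
induction in `sum_patternWeight_le` requires. -/
def patternWeight (π : Sym2 V → ℝ) (S : Finset ℕ) (w : Fin (L + 1) → V) : ℝ :=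
  ∏ t : Fin L, if (t : ℕ) ∈ S then π (edge w t) else if w t.succ ∈ visited w t then 1 else 0

lemma patternWeight_nonneg {π : Sym2 V → ℝ} (hπ : ∀ e, 0 ≤ π e) (S : Finset ℕ)
    (w : Fin (L + 1) → V) : 0 ≤ patternWeight π S w :=
  prod_nonneg fun t _ => by split_ifs <;> simp [hπ]

lemma patternWeight_snoc (π : Sym2 V → ℝ) (S : Finset ℕ) (w : Fin (L + 1) → V) (z : V) :
    patternWeight π S (Fin.snoc w z : Fin (L + 2) → V) = patternWeight π S w *
      if L ∈ S then π s(w (Fin.last L), z) else if z ∈ univ.image w then 1 else 0 := by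
  have hvis : ∀ t : Fin (L + 1), visited (Fin.snoc w z : Fin (L + 2) → V) t = (Iic t).image w := by
    intro t
    rw [visited, ← Fin.finsetImage_castSucc_Iic, image_image]
    congr 1
    funext s
    exact Fin.snoc_castSucc ..
  rw [patternWeight, Fin.prod_univ_castSucc]
  congr 1
  · refine prod_congr rfl fun t _ => ?_
    simp only [edge, hvis, Fin.val_castSucc, Fin.snoc_castSucc, Fin.succ_castSucc]
    rfl
  · simp only [edge, hvis, Fin.snoc_castSucc, Fin.val_last, Fin.succ_last, Fin.snoc_last]
    rw [show Iic (Fin.last L) = univ from Iic_top]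

lemma patternWeight_newSteps (π : Sym2 V → ℝ) (w : Fin (L + 1) → V) :
    patternWeight π ((newSteps w).map Fin.valEmbedding) w = ∏ t ∈ newSteps w, π (edge w t) := by
  rw [← Fintype.prod_ite_mem]
  refine prod_congr rfl fun t _ => ?_
  simp only [show (t : ℕ) ∈ (newSteps w).map Fin.valEmbedding ↔ t ∈ newSteps w from
    mem_map' Fin.valEmbedding]
  by_cases ht : t ∈ newSteps w
  · rw [if_pos ht, if_pos ht]
  · rw [if_neg ht, if_neg ht, if_pos (by simpa [newSteps] using ht)]

theorem sum_patternWeight_le [Fintype V] {π : Sym2 V → ℝ} (hπ : ∀ e, 0 ≤ π e) {D : ℝ}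
    (hD : 0 ≤ D) (hrow : ∀ u, ∑ v, π s(u, v) ≤ D) (S : Finset ℕ) (L : ℕ) :
    ∑ w : Fin (L + 1) → V, patternWeight π S w ≤
      Fintype.card V * ∏ t : Fin L, if (t : ℕ) ∈ S then D else ((t : ℝ) + 1) := by
  induction L with
  | zero => simp [patternWeight]
  | succ L ih =>
    set B : ℝ := if L ∈ S then D else (L : ℝ) + 1
    have hlast : ∀ w : Fin (L + 1) → V,
        ∑ z, (if L ∈ S then π s(w (Fin.last L), z) else if z ∈ univ.image w then 1 else 0) ≤ B := by
      intro w
      by_cases hL : L ∈ S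
      · simpa [B, hL] using hrow (w (Fin.last L))
      · simp only [B, hL, if_false, sum_boole, filter_mem_eq_inter, univ_inter]
        exact_mod_cast card_image_le.trans (by simp)
    calc ∑ w : Fin (L + 2) → V, patternWeight π S w
        = ∑ w : Fin (L + 1) → V, patternWeight π S w *
            ∑ z, (if L ∈ S then π s(w (Fin.last L), z) else if z ∈ univ.image w then 1 else 0) := by
          rw [← (Fin.snocEquiv fun _ => V).sum_comp, Fintype.sum_prod_type_right]
          simp only [Fin.snocEquiv, Equiv.coe_fn_mk, patternWeight_snoc, mul_sum]
      _ ≤ ∑ w : Fin (L + 1) → V, patternWeight π S w * B :=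
          sum_le_sum fun w _ => mul_le_mul_of_nonneg_left (hlast w) (patternWeight_nonneg hπ S w)
      _ ≤ (Fintype.card V * ∏ t : Fin L, if (t : ℕ) ∈ S then D else ((t : ℝ) + 1)) * B := by
          rw [← sum_mul]
          exact mul_le_mul_of_nonneg_right ih (by positivity)
      _ = _ := by rw [Fin.prod_univ_castSucc, mul_assoc]; simp [B]

section Moments

variable [Fintype V] {Φ : Sym2 V → ℕ → ℝ} {π : Sym2 V → ℝ}

lemma abs_prod_le_sum_patternWeight (hΦ₀ : ∀ e, Φ e 0 = 1) (hΦ₁ : ∀ e, Φ e 1 = 0)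
    (hΦ : ∀ e m, 2 ≤ m → |Φ e m| ≤ π e) (hπ₀ : ∀ e, 0 ≤ π e) (hπ₁ : ∀ e, π e ≤ 1)
    (w : Fin (L + 1) → V) :
    |∏ e, Φ e (edgeMult w e)| ≤
      ∑ S ∈ (range L).powerset with 2 * #S ≤ L, patternWeight π S w := by
  by_cases hw : ∃ e, edgeMult w e = 1
  · obtain ⟨e, he⟩ := hw
    rw [prod_eq_zero (mem_univ e) (by rw [he, hΦ₁]), abs_zero]
    exact sum_nonneg fun S _ => patternWeight_nonneg hπ₀ S w
  simp only [not_exists] at hw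
  have hS : (newSteps w).map Fin.valEmbedding ∈
      ((range L).powerset.filter fun S => 2 * #S ≤ L) := by
    simpa [subset_iff] using two_mul_card_newSteps_le hw
  refine le_trans ?_ (single_le_sum (fun S _ => patternWeight_nonneg hπ₀ S w) hS)
  calc |∏ e, Φ e (edgeMult w e)|
      ≤ ∏ e, if e ∈ univ.image (edge w) then π e else 1 := by
        rw [abs_prod]
        refine prod_le_prod (fun _ _ => abs_nonneg _) fun e _ => ?_
        split_ifs with he
        · obtain ⟨t, -, rfl⟩ := mem_image.mp he
          have : 0 < edgeMult w (edge w t) := card_pos.mpr ⟨t, by simp⟩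
          exact hΦ _ _ (by have := hw (edge w t); omega)
        · have : edgeMult w e = 0 := card_eq_zero.mpr <| filter_eq_empty_iff.mpr
            fun t _ h => he (h ▸ mem_image_of_mem _ (mem_univ t))
          rw [this, hΦ₀, abs_one]
    _ = ∏ e ∈ univ.image (edge w), π e := Fintype.prod_ite_mem _ _
    _ ≤ ∏ e ∈ (newSteps w).image (edge w), π e :=
        prod_le_prod_of_subset_of_le_one (image_subset_image (subset_univ _))
          (fun e _ => hπ₀ e) fun e _ _ => hπ₁ e
    _ = patternWeight π ((newSteps w).map Fin.valEmbedding) w := by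
        rw [prod_image (edge_injOn_newSteps w), patternWeight_newSteps]

lemma sum_patternWeight_le_of_card_le {π : Sym2 V → ℝ} (hπ : ∀ e, 0 ≤ π e) {D : ℝ}
    (hrow : ∀ u, ∑ v, π s(u, v) ≤ D) {k : ℕ} (hkD : 2 * k ≤ D) {S : Finset ℕ} (hS : #S ≤ k) :
    ∑ w : Fin (2 * k + 1) → V, patternWeight π S w ≤
      Fintype.card V * (D ^ k * (2 * k : ℝ) ^ k) := by
  have hD : 0 ≤ D := le_trans (by positivity) hkD
  refine (sum_patternWeight_le hπ hD hrow S _).trans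
    (mul_le_mul_of_nonneg_left ?_ (by positivity))
  calc ∏ t : Fin (2 * k), (if (t : ℕ) ∈ S then D else ((t : ℝ) + 1))
      ≤ ∏ t : Fin (2 * k), (if (t : ℕ) ∈ S then D else (2 * k : ℝ)) := by
        refine prod_le_prod (fun t _ => by split_ifs <;> positivity) fun t _ => ?_
        split_ifs
        · exact le_rfl
        · exact_mod_cast t.isLt
    _ ≤ D ^ k * (2 * k : ℝ) ^ k := by
        refine prod_ite_le_pow_mul_pow (by positivity) hkD (by simp) ?_
        exact (card_le_card_of_injOn Fin.val (fun t ht => (mem_filter.mp ht).2)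
          Fin.val_injective.injOn).trans hS

theorem sum_abs_prod_edgeMult_le (hΦ₀ : ∀ e, Φ e 0 = 1) (hΦ₁ : ∀ e, Φ e 1 = 0)
    (hΦ : ∀ e m, 2 ≤ m → |Φ e m| ≤ π e) (hπ₀ : ∀ e, 0 ≤ π e) (hπ₁ : ∀ e, π e ≤ 1) {D : ℝ}
    (hrow : ∀ u, ∑ v, π s(u, v) ≤ D) {k : ℕ} (hkD : 2 * k ≤ D) :
    ∑ w : Fin (2 * k + 1) → V, |∏ e, Φ e (edgeMult w e)| ≤
      Fintype.card V * (8 * k * D) ^ k := by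
  set T := (range (2 * k)).powerset.filter fun S => 2 * #S ≤ 2 * k
  have hD : 0 ≤ D := le_trans (by positivity) hkD
  have hT : (#T : ℝ) ≤ 4 ^ k := by
    have : #T ≤ 4 ^ k := (card_filter_le _ _).trans (by simp [pow_mul])
    exact_mod_cast this
  calc ∑ w : Fin (2 * k + 1) → V, |∏ e, Φ e (edgeMult w e)|
      ≤ ∑ w : Fin (2 * k + 1) → V, ∑ S ∈ T, patternWeight π S w :=
        sum_le_sum fun w _ => abs_prod_le_sum_patternWeight hΦ₀ hΦ₁ hΦ hπ₀ hπ₁ w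
    _ = ∑ S ∈ T, ∑ w : Fin (2 * k + 1) → V, patternWeight π S w := sum_comm
    _ ≤ ∑ _S ∈ T, Fintype.card V * (D ^ k * (2 * k : ℝ) ^ k) :=
        sum_le_sum fun S hS => sum_patternWeight_le_of_card_le hπ₀ hrow hkD (by
          have := (mem_filter.mp hS).2
          omega)
    _ ≤ 4 ^ k * (Fintype.card V * (D ^ k * (2 * k : ℝ) ^ k)) := by
        rw [sum_const, nsmul_eq_mul]
        exact mul_le_mul_of_nonneg_right hT (by positivity)
    _ = Fintype.card V * (8 * k * D) ^ k := by
        rw [show (8 : ℝ) * k * D = 4 * (D * (2 * k)) by ring, mul_pow, mul_pow]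
        ring

end Moments

end TupleWalk

namespace Sym2

variable {α : Type*} [LinearOrder α]

lemma sortEquiv_mk_of_le {i j : α} (h : i ≤ j) : sortEquiv s(i, j) = ⟨(i, j), h⟩ :=
  Subtype.ext (by simp [h])

lemma sortEquiv_mk_of_not_le {i j : α} (h : ¬i ≤ j) :
    sortEquiv s(i, j) = ⟨(j, i), (le_total i j).resolve_left h⟩ := by
  rw [eq_swap, sortEquiv_mk_of_le]

end Sym2

section Bernoulli

instance (x : ℝ) : IsFiniteMeasure (bernoulliMeasure x) :=
  ⟨by simp [bernoulliMeasure, ENNReal.add_lt_top]⟩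

variable {x : ℝ}

lemma isProbabilityMeasure_bernoulliMeasure (h₀ : 0 ≤ x) (h₁ : x ≤ 1) :
    IsProbabilityMeasure (bernoulliMeasure x) := by
  constructor
  simp [bernoulliMeasure, ← ENNReal.ofReal_add h₀ (sub_nonneg.mpr h₁)]

lemma integral_bernoulliMeasure (h₀ : 0 ≤ x) (h₁ : x ≤ 1) (g : Bool → ℝ) :
    ∫ b, g b ∂bernoulliMeasure x = x * g true + (1 - x) * g false := by
  rw [bernoulliMeasure, integral_add_measure, integral_smul_measure, integral_smul_measure,
    integral_dirac, integral_dirac, ENNReal.toReal_ofReal h₀,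
    ENNReal.toReal_ofReal (sub_nonneg.mpr h₁), smul_eq_mul, smul_eq_mul]
  all_goals exact Integrable.of_finite.smul_measure ENNReal.ofReal_ne_top

lemma abs_centered_moment_le (h₀ : 0 ≤ x) (h₁ : x ≤ 1) {m : ℕ} (hm : 2 ≤ m) :
    |x * (1 - x) ^ m + (1 - x) * (-x) ^ m| ≤ x := by
  have h₁' : 0 ≤ 1 - x := sub_nonneg.mpr h₁
  calc |x * (1 - x) ^ m + (1 - x) * (-x) ^ m|
      ≤ x * (1 - x) ^ m + (1 - x) * x ^ m := by
        refine (abs_add_le _ _).trans_eq ?_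
        rw [abs_mul, abs_mul, abs_pow, abs_pow, abs_neg, abs_of_nonneg h₀, abs_of_nonneg h₁']
    _ ≤ x * (1 - x) + (1 - x) * x ^ 2 :=
        add_le_add (mul_le_mul_of_nonneg_left (pow_le_of_le_one h₁' (by linarith) (by omega)) h₀)
          (mul_le_mul_of_nonneg_left (pow_le_pow_of_le_one h₀ h₁ hm) h₁')
    _ ≤ x := by nlinarith [mul_nonneg h₀ h₀]

end Bernoulli

namespace SignedCSBM

variable {N C : ℕ} (y : Fin N → Fin C) (p q : ℝ)

def edgeProb (c : PairIdx N) : ℝ := if y c.1.1 = y c.1.2 then p else q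

lemma edgeProb_mem_Icc {p q : ℝ} (hp : p ∈ Set.Icc (0 : ℝ) 1) (hq : q ∈ Set.Icc (0 : ℝ) 1)
    (c : PairIdx N) : edgeProb y p q c ∈ Set.Icc (0 : ℝ) 1 := by
  unfold edgeProb; split_ifs <;> assumption

def edgeSign (c : PairIdx N) : ℝ := if y c.1.1 = y c.1.2 then 1 else -1

def noise (c : PairIdx N) (b : Bool) : ℝ :=
  edgeSign y c * ((if b then 1 else 0) - edgeProb y p q c)

lemma ite_sortEquiv_mk {α : Type*} (a b : α) (i j : Fin N) :
    (if y (Sym2.sortEquiv s(i, j)).1.1 = y (Sym2.sortEquiv s(i, j)).1.2 then a else b) =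
      if y i = y j then a else b := by
  by_cases h : i ≤ j
  · rw [Sym2.sortEquiv_mk_of_le h]
  · rw [Sym2.sortEquiv_mk_of_not_le h]
    exact if_congr eq_comm rfl rfl

lemma csbmMatrix_sub_csbmExpectedMatrix (ω : PairIdx N → Bool) :
    csbmMatrix N C y ω - csbmExpectedMatrix N C y p q =
      Matrix.of fun i j => noise y p q (Sym2.sortEquiv s(i, j)) (ω (Sym2.sortEquiv s(i, j))) := by
  ext i j
  have hsign := ite_sortEquiv_mk y (1 : ℝ) (-1) i j
  have hprob := ite_sortEquiv_mk y p q i j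
  simp only [noise, edgeSign, edgeProb, Matrix.sub_apply, Matrix.of_apply, hsign, hprob,
    csbmMatrix, csbmExpectedMatrix]
  by_cases h : i ≤ j
  · rw [dif_pos h, Sym2.sortEquiv_mk_of_le h]
    split_ifs <;> ring
  · rw [dif_neg h, Sym2.sortEquiv_mk_of_not_le h]
    split_ifs <;> ring

lemma isHermitian_csbmMatrix_sub_csbmExpectedMatrix (ω : PairIdx N → Bool) :
    (csbmMatrix N C y ω - csbmExpectedMatrix N C y p q).IsHermitian := by
  rw [csbmMatrix_sub_csbmExpectedMatrix]
  ext i j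
  simp [Sym2.eq_swap]

instance : IsFiniteMeasure (csbmMeasure N C y p q) := by
  unfold csbmMeasure; infer_instance

lemma isProbabilityMeasure_csbmMeasure {p q : ℝ} (hp : p ∈ Set.Icc (0 : ℝ) 1)
    (hq : q ∈ Set.Icc (0 : ℝ) 1) : IsProbabilityMeasure (csbmMeasure N C y p q) := by
  have (c : PairIdx N) : IsProbabilityMeasure
      (bernoulliMeasure (if y c.1.1 = y c.1.2 then p else q)) :=
    isProbabilityMeasure_bernoulliMeasure (edgeProb_mem_Icc y hp hq c).1
      (edgeProb_mem_Icc y hp hq c).2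
  exact Measure.pi.instIsProbabilityMeasure _

noncomputable def noiseMoment (c : PairIdx N) (m : ℕ) : ℝ :=
  ∫ b, noise y p q c b ^ m ∂bernoulliMeasure (edgeProb y p q c)

variable {p q}

lemma noiseMoment_eq (hp : p ∈ Set.Icc (0 : ℝ) 1) (hq : q ∈ Set.Icc (0 : ℝ) 1)
    (c : PairIdx N) (m : ℕ) :
    noiseMoment y p q c m = edgeSign y c ^ m *
      (edgeProb y p q c * (1 - edgeProb y p q c) ^ m +
        (1 - edgeProb y p q c) * (-edgeProb y p q c) ^ m) := by
  obtain ⟨h₀, h₁⟩ := edgeProb_mem_Icc y hp hq c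
  rw [noiseMoment, integral_bernoulliMeasure h₀ h₁]
  simp only [noise, Bool.false_eq_true, if_true, if_false, mul_pow]
  ring

lemma abs_noiseMoment_le (hp : p ∈ Set.Icc (0 : ℝ) 1) (hq : q ∈ Set.Icc (0 : ℝ) 1)
    (c : PairIdx N) {m : ℕ} (hm : 2 ≤ m) : |noiseMoment y p q c m| ≤ edgeProb y p q c := by
  obtain ⟨h₀, h₁⟩ := edgeProb_mem_Icc y hp hq c
  have hsign : |edgeSign y c| = 1 := by unfold edgeSign; split_ifs <;> simp
  rw [noiseMoment_eq y hp hq, abs_mul, abs_pow, hsign, one_pow, one_mul]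
  exact abs_centered_moment_le h₀ h₁ hm

lemma sum_edgeProb_sortEquiv (hC : C ≠ 0) (hdvd : C ∣ N)
    (hy : ∀ c : Fin C, #{i | y i = c} = N / C) (u : Fin N) :
    ∑ v, edgeProb y p q (Sym2.sortEquiv s(u, v)) = expectedDegree N C p q := by
  have hsame : #{v | y u = y v} = N / C := by
    rw [← hy (y u)]; exact congrArg card (filter_congr fun v _ => eq_comm)
  have hdiff : #{v | ¬y u = y v} = N - N / C := by
    have := card_filter_add_card_filter_not (s := univ) (fun v => y u = y v)
    rw [card_univ, Fintype.card_fin] at this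
    omega
  have hcast : ((N / C : ℕ) : ℝ) = (N : ℝ) / C := Nat.cast_div hdvd (by exact_mod_cast hC)
  simp only [edgeProb, ite_sortEquiv_mk, sum_ite, sum_const, nsmul_eq_mul, hsame, hdiff,
    expectedDegree, hcast, Nat.cast_sub (Nat.div_le_self N C)]

theorem integral_walkWeight {L : ℕ} (w : Fin (L + 1) → Fin N) :
    ∫ ω, (csbmMatrix N C y ω - csbmExpectedMatrix N C y p q).walkWeight w
        ∂csbmMeasure N C y p q =
      ∏ e, noiseMoment y p q (Sym2.sortEquiv e) (TupleWalk.edgeMult w e) := by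
  have hprod : ∀ ω, (csbmMatrix N C y ω - csbmExpectedMatrix N C y p q).walkWeight w =
      ∏ c, noise y p q c (ω c) ^ TupleWalk.edgeMult w (Sym2.sortEquiv.symm c) := by
    intro ω
    rw [csbmMatrix_sub_csbmExpectedMatrix]
    refine (TupleWalk.prod_edge_eq_prod_pow
      (fun e => noise y p q (Sym2.sortEquiv e) (ω (Sym2.sortEquiv e))) w).trans ?_
    rw [← Sym2.sortEquiv.prod_comp]
    simp
  simp_rw [hprod]
  refine (integral_fintype_prod_eq_prod
    (fun c b => noise y p q c b ^ TupleWalk.edgeMult w (Sym2.sortEquiv.symm c))).trans ?_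
  rw [← Sym2.sortEquiv.prod_comp]
  simp [noiseMoment, edgeProb]

theorem integral_trace_pow_le (hp : p ∈ Set.Icc (0 : ℝ) 1) (hq : q ∈ Set.Icc (0 : ℝ) 1)
    (hC : C ≠ 0) (hdvd : C ∣ N) (hy : ∀ c : Fin C, #{i | y i = c} = N / C) {k : ℕ}
    (hkD : 2 * k ≤ expectedDegree N C p q) :
    ∫ ω, ((csbmMatrix N C y ω - csbmExpectedMatrix N C y p q) ^ (2 * k)).trace
        ∂csbmMeasure N C y p q ≤ N * (8 * k * expectedDegree N C p q) ^ k := by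
  simp_rw [Matrix.trace_pow_eq_sum_walkWeight]
  rw [integral_finsetSum _ fun w _ => Integrable.of_finite]
  simp_rw [integral_walkWeight]
  calc ∑ w : Fin (2 * k + 1) → Fin N with w (Fin.last _) = w 0,
        ∏ e, noiseMoment y p q (Sym2.sortEquiv e) (TupleWalk.edgeMult w e)
      ≤ ∑ w : Fin (2 * k + 1) → Fin N,
          |∏ e, noiseMoment y p q (Sym2.sortEquiv e) (TupleWalk.edgeMult w e)| :=
        (sum_le_sum fun w _ => le_abs_self _).trans
          (sum_le_sum_of_subset_of_nonneg (filter_subset _ _) fun w _ _ => abs_nonneg _)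
    _ ≤ Fintype.card (Fin N) * (8 * k * expectedDegree N C p q) ^ k :=
        TupleWalk.sum_abs_prod_edgeMult_le (Φ := fun e => noiseMoment y p q (Sym2.sortEquiv e))
          (π := fun e => edgeProb y p q (Sym2.sortEquiv e))
          (fun e => by simp [noiseMoment_eq y hp hq])
          (fun e => by simp only [noiseMoment_eq y hp hq]; ring)
          (fun e m hm => abs_noiseMoment_le y hp hq _ hm)
          (fun e => (edgeProb_mem_Icc y hp hq _).1) (fun e => (edgeProb_mem_Icc y hp hq _).2)
          (fun u => (sum_edgeProb_sortEquiv y hC hdvd hy u).le) hkD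
    _ = N * (8 * k * expectedDegree N C p q) ^ k := by rw [Fintype.card_fin]

theorem pow_mul_measureReal_lt_l2OpNorm_le (hp : p ∈ Set.Icc (0 : ℝ) 1)
    (hq : q ∈ Set.Icc (0 : ℝ) 1) (hC : C ≠ 0) (hdvd : C ∣ N)
    (hy : ∀ c : Fin C, #{i | y i = c} = N / C) {m : ℕ}
    (hkD : 2 * 2 ^ m ≤ expectedDegree N C p q) {t : ℝ} (ht : 0 ≤ t) :
    t ^ (2 * 2 ^ m) * (csbmMeasure N C y p q).real
        {ω | t < l2OpNorm (csbmMatrix N C y ω - csbmExpectedMatrix N C y p q)} ≤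
      N * (8 * 2 ^ m * expectedDegree N C p q) ^ 2 ^ m := by
  refine (mul_measureReal_lt_l2_opNorm_le_integral_trace (μ := csbmMeasure N C y p q)
    (isHermitian_csbmMatrix_sub_csbmExpectedMatrix y p q) m Integrable.of_finite ht).trans ?_
  exact_mod_cast integral_trace_pow_le y hp hq hC hdvd hy (k := 2 ^ m) (by exact_mod_cast hkD)

end SignedCSBM

lemma exists_two_pow_mem_Icc {x : ℝ} (hx : 1 / 2 ≤ x) :
    ∃ m : ℕ, x ≤ 2 ^ m ∧ (2 : ℝ) ^ m ≤ 2 * x := by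
  obtain ⟨m, hm, hm'⟩ := exists_nat_pow_near (show 1 ≤ 2 * x by linarith) one_lt_two
  exact ⟨m, by rw [pow_succ] at hm'; linarith, hm⟩

lemma exists_two_pow_exponent {σ r ℓ D : ℝ} (hσ : 0 < σ) (hℓ : 1 / 2 ≤ ℓ)
    (hD : max 4 (16 * Real.exp (1 + r) / σ ^ 2) * ℓ ≤ D) :
    ∃ m : ℕ, ℓ ≤ 2 ^ m ∧ 2 * 2 ^ m ≤ D ∧ 8 * 2 ^ m * Real.exp (1 + r) ≤ σ ^ 2 * D := by
  obtain ⟨m, hℓm, hmℓ⟩ := exists_two_pow_mem_Icc hℓ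
  refine ⟨m, hℓm, by nlinarith [le_max_left 4 (16 * Real.exp (1 + r) / σ ^ 2)], ?_⟩
  have h := (mul_le_mul_of_nonneg_right (le_max_right 4 (16 * Real.exp (1 + r) / σ ^ 2))
    (by linarith : 0 ≤ ℓ)).trans hD
  rw [div_mul_eq_mul_div, div_le_iff₀ (by positivity)] at h
  nlinarith [mul_le_mul_of_nonneg_right hmℓ (Real.exp_pos (1 + r)).le]

lemma mul_pow_le_rpow_neg_mul_pow {N D σ r : ℝ} {k : ℕ} (hN : 0 < N) (hk : Real.log N ≤ k)
    (hr : 0 ≤ r) (hD : 0 ≤ D) (h : 8 * k * Real.exp (1 + r) ≤ σ ^ 2 * D) :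
    N * (8 * k * D) ^ k ≤ N ^ (-r) * (σ * D) ^ (2 * k) := by
  have hbase : 8 * k * D ≤ Real.exp (-(1 + r)) * (σ * D) ^ 2 := by
    have hE : Real.exp (-(1 + r)) * Real.exp (1 + r) = 1 := by rw [← Real.exp_add]; simp
    calc 8 * k * D = Real.exp (-(1 + r)) * (8 * k * Real.exp (1 + r)) * D := by
          linear_combination -(8 * k * D) * hE
      _ ≤ Real.exp (-(1 + r)) * (σ ^ 2 * D) * D := by gcongr
      _ = Real.exp (-(1 + r)) * (σ * D) ^ 2 := by ring
  have hexp : Real.exp (-(1 + r)) ^ k ≤ N ^ (-(1 + r)) := by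
    rw [← Real.exp_nat_mul, Real.rpow_def_of_pos hN, Real.exp_le_exp]
    nlinarith [mul_le_mul_of_nonneg_right hk (by linarith : (0 : ℝ) ≤ 1 + r)]
  calc N * (8 * k * D) ^ k ≤ N * (Real.exp (-(1 + r)) * (σ * D) ^ 2) ^ k := by gcongr
    _ = N * Real.exp (-(1 + r)) ^ k * (σ * D) ^ (2 * k) := by rw [mul_pow, pow_mul]; ring
    _ ≤ N * N ^ (-(1 + r)) * (σ * D) ^ (2 * k) := by
        gcongr
        exact (even_two_mul k).pow_nonneg _
    _ = N ^ (-r) * (σ * D) ^ (2 * k) := by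
        rw [show -r = 1 + -(1 + r) by ring, Real.rpow_add hN, Real.rpow_one]

lemma ofReal_one_sub_le_measure {Ω : Type*} [MeasurableSpace Ω] {μ : Measure Ω}
    [IsProbabilityMeasure μ] {s : Set Ω} (hs : MeasurableSet s) {a : ℝ} (h : μ.real sᶜ ≤ a) :
    ENNReal.ofReal (1 - a) ≤ μ s := by
  rw [← ofReal_measureReal]
  exact ENNReal.ofReal_le_ofReal (by linarith [probReal_compl_eq_one_sub (μ := μ) hs])

open SignedCSBM in
theorem stmt_14 (σ r : ℝ) (hσ : 0 < σ) (hr : 0 < r) :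
    ∃ κ : ℝ, 0 < κ ∧
      ∀ (N C : ℕ), 2 ≤ C → C ∣ N →
      ∀ y : Fin N → Fin C,
        (∀ c : Fin C,
          (Finset.univ.filter (fun i => y i = c)).card = N / C) →
      ∀ p q : ℝ, p ∈ Set.Ioo (0 : ℝ) 1 → q ∈ Set.Ioo (0 : ℝ) 1 →
      κ * Real.log N ≤ expectedDegree N C p q →
      ENNReal.ofReal (1 - 2 * (N : ℝ) ^ (-r)) ≤
        csbmMeasure N C y p q
          {ω |
            l2OpNorm (csbmMatrix N C y ω - csbmExpectedMatrix N C y p q) ≤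
              σ * expectedDegree N C p q} := by
  refine ⟨max 4 (16 * Real.exp (1 + r) / σ ^ 2), by positivity, ?_⟩
  intro N C hC hdvd y hy p q hp hq hdeg
  set D := expectedDegree N C p q
  have hp' := Set.Ioo_subset_Icc_self hp
  have hq' := Set.Ioo_subset_Icc_self hq
  have := isProbabilityMeasure_csbmMeasure y hp' hq'
  refine (ENNReal.ofReal_le_ofReal ?_).trans
    (ofReal_one_sub_le_measure (a := (N : ℝ) ^ (-r)) .of_discrete ?_)
  · linarith [Real.rpow_nonneg N.cast_nonneg (-r)]
  simp only [Set.compl_ofPred, not_le]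
  rcases N.eq_zero_or_pos with rfl | hN
  · -- the empty matrix has norm `0`, and `(0 : ℝ) ^ (-r) = 0` by the `rpow` convention
    simp [l2OpNorm, D, expectedDegree, hr.ne']
  have hN2 : (2 : ℝ) ≤ N := by exact_mod_cast hC.trans (Nat.le_of_dvd hN hdvd)
  have hlog : 1 / 2 ≤ Real.log N := by
    linarith [Real.log_two_gt_d9, Real.log_le_log two_pos hN2]
  obtain ⟨m, hlogm, hmD, hσD⟩ := exists_two_pow_exponent hσ hlog hdeg
  have hD : 0 < D := by linarith [one_le_pow₀ (n := m) (one_le_two (α := ℝ))]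
  refine le_of_mul_le_mul_left ?_ (pow_pos (mul_pos hσ hD) (2 * 2 ^ m))
  calc (σ * D) ^ (2 * 2 ^ m) * (csbmMeasure N C y p q).real
          {ω | σ * D < l2OpNorm (csbmMatrix N C y ω - csbmExpectedMatrix N C y p q)}
      ≤ N * (8 * 2 ^ m * D) ^ 2 ^ m :=
        pow_mul_measureReal_lt_l2OpNorm_le y hp' hq' (by omega) hdvd hy hmD (by positivity)
    _ ≤ N ^ (-r) * (σ * D) ^ (2 * 2 ^ m) := by
        exact_mod_cast mul_pow_le_rpow_neg_mul_pow (by positivity) (by exact_mod_cast hlogm)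
          hr.le hD.le (by exact_mod_cast hσD)
    _ = (σ * D) ^ (2 * 2 ^ m) * N ^ (-r) := mul_comm _ _
end
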